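/- Let G ∼ RIG(n,d,p) where 1−p = (1−δ²)^d = Ω(1). Then the expected signed triangle count satisfies E[T_s(G)] = C(n,3)·(1−p)³·(dδ³ + O(dδ⁴)); that is, |E[T_s(G)] − C(n,3)·(1−p)³·dδ³| = O(C(n,3)·(1−p)³·dδ⁴) as n → ∞. -/

import Mathlib

open MeasureTheory Filter

noncomputable section

/-- Total variation distance between two measures. -/
def tvDist {α : Type*} [MeasurableSpace α] (μ ν : Measure α) : ℝ :=
  ⨆ s : Set α, |(μ s).toReal - (ν s).toReal|

/-- The Bernoulli measure on `Bool` with success probability `p`. -/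
def bern (p : ℝ) : Measure Bool :=
  ENNReal.ofReal p • Measure.dirac true + ENNReal.ofReal (1 - p) • Measure.dirac false

/-- Index type for potential edges of a graph on `Fin n`. -/
abbrev PairIdx (n : ℕ) := {e : Fin n × Fin n // e.1 < e.2}

/-- Erdős–Rényi graph `G(n,p)`, as a measure on edge indicator functions. -/
def erdosRenyi (n : ℕ) (p : ℝ) : Measure (PairIdx n → Bool) :=
  Measure.pi fun _ => bern p

/-- Membership configuration of `n` independent `δ`-random subsets of `{1,…,d}`. -/
def rigConfig (n d : ℕ) (δ : ℝ) : Measure (Fin n → Fin d → Bool) :=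
  Measure.pi fun _ => Measure.pi fun _ => bern δ

/-- Cardinality of `S_i ∩ S_j` for a membership configuration. -/
def interCard {n d : ℕ} (x : Fin n → Fin d → Bool) (i j : Fin n) : ℕ :=
  (Finset.univ.filter fun k => x i k = true ∧ x j k = true).card

/-- The τ-random intersection graph: edge `{i,j}` present iff `|S_i ∩ S_j| ≥ τ`. -/
def rigTau (n d : ℕ) (δ : ℝ) (τ : ℕ) : Measure (PairIdx n → Bool) :=
  (rigConfig n d δ).map fun x e => decide (τ ≤ interCard x e.1.1 e.1.2)

/-- The random intersection graph `RIG(n,d,p)` where `p = 1 - (1-δ²)^d`. -/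
def rig (n d : ℕ) (δ : ℝ) : Measure (PairIdx n → Bool) := rigTau n d δ 1

/-- Edge indicator (as a real number) of the unordered pair `{i,j}` in a graph. -/
def edgeVal {n : ℕ} (g : PairIdx n → Bool) (i j : Fin n) : ℝ :=
  if h : i < j then (if g ⟨(i, j), h⟩ then 1 else 0)
  else if h' : j < i then (if g ⟨(j, i), h'⟩ then 1 else 0)
  else 0

/-- Ordered triples `i < j < k` of vertices. -/
def triples (n : ℕ) : Finset (Fin n × Fin n × Fin n) :=
  Finset.univ.filter fun t => t.1 < t.2.1 ∧ t.2.1 < t.2.2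

/-- The signed triangle count
`T_s(G) = ∑_{i<j<k} (e_{ij}-p)(e_{ik}-p)(e_{jk}-p)`. -/
def signedTriangles {n : ℕ} (p : ℝ) (g : PairIdx n → Bool) : ℝ :=
  ∑ t ∈ triples n,
    (edgeVal g t.1 t.2.1 - p) * (edgeVal g t.1 t.2.2 - p) * (edgeVal g t.2.1 t.2.2 - p)

/-!
Write `Z_ij` for the indicator that `S_i ∩ S_j = ∅` and `q = 1 - p`, so that each summand of
`T_s` is `(q - Z_ij)(q - Z_ik)(q - Z_jk)`. The columns `(x_iℓ, x_jℓ, x_kℓ)`, `ℓ ≤ d`, are i.i.d.,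
so every monomial in the `Z`s has as expectation the `d`-th power of a one-coordinate probability:
`E Z_ij = a^d`, `E Z_ij Z_ik = b^d`, `E Z_ij Z_ik Z_jk = e^d` with `a = 1 - δ²`,
`b = 1 - 2δ² + δ³`, `e = 1 - 3δ² + 2δ³`. Hence `E T_s = C(n,3) (q³ - 3q² a^d + 3q b^d - e^d)`
exactly. Writing `b = a²(1 + u)`, `e = a³(1 + v)` with `u, v = O(δ³)` and `q = a^d`, this is
`C(n,3) q³ (3(1+u)^d - (1+v)^d - 2)`; the linear part in `d` is `d(3u - v) = dδ³ + O(dδ⁶)`, and the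
binomial remainders are `O((dδ³)²) = O(dδ⁴ · dδ²)`, where `dδ² ≤ 1/c` because `(1 - δ²)^d ≥ c`.
-/

lemma isProbabilityMeasure_bern {δ : ℝ} (h0 : 0 ≤ δ) (h1 : δ ≤ 1) :
    IsProbabilityMeasure (bern δ) :=
  ⟨by simp [bern, ← ENNReal.ofReal_add h0 (sub_nonneg.2 h1)]⟩

lemma integral_bern {δ : ℝ} (h0 : 0 ≤ δ) (h1 : δ ≤ 1) (f : Bool → ℝ) :
    ∫ b, f b ∂(bern δ) = δ * f true + (1 - δ) * f false := by
  have := isProbabilityMeasure_bern h0 h1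
  rw [integral_fintype .of_finite]
  simp [bern, measureReal_def, h0, h1]

lemma integral_bern_cube {δ : ℝ} (h0 : 0 ≤ δ) (h1 : δ ≤ 1) (G : Bool × Bool × Bool → ℝ) :
    ∫ b, G b ∂((bern δ).prod ((bern δ).prod (bern δ))) =
      δ * (δ * (δ * G (true, true, true) + (1 - δ) * G (true, true, false)) +
        (1 - δ) * (δ * G (true, false, true) + (1 - δ) * G (true, false, false))) +
      (1 - δ) * (δ * (δ * G (false, true, true) + (1 - δ) * G (false, true, false)) +
        (1 - δ) * (δ * G (false, false, true) + (1 - δ) * G (false, false, false))) := by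
  have := isProbabilityMeasure_bern h0 h1
  simp [integral_prod _ Integrable.of_finite, integral_bern h0 h1]

namespace MeasureTheory.Measure

open ProbabilityTheory in
lemma pi_map_eval₃ {ι α : Type*} [Fintype ι] [MeasurableSpace α] (ν : Measure α)
    [IsProbabilityMeasure ν] {i j k : ι} (hij : i ≠ j) (hik : i ≠ k) (hjk : j ≠ k) :
    (Measure.pi fun _ : ι => ν).map (fun x => (x i, x j, x k)) = ν.prod (ν.prod ν) := by
  have hind : iIndepFun (fun m (x : ι → α) => x m) (Measure.pi fun _ => ν) :=
    iIndepFun_pi (X := fun _ => id) fun _ => aemeasurable_id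
  have hmeas : ∀ m, Measurable fun x : ι → α => x m := measurable_pi_apply
  have hmarg : ∀ m, (Measure.pi fun _ : ι => ν).map (fun x => x m) = ν := fun m =>
    (measurePreserving_eval (fun _ => ν) m).map_eq
  have hpair := (indepFun_iff_map_prod_eq_prod_map_map
    (hmeas j).aemeasurable (hmeas k).aemeasurable).1 (hind.indepFun hjk)
  rw [indepFun_iff_map_prod_eq_prod_map_map (hmeas i).aemeasurable
    ((hmeas j).prodMk (hmeas k)).aemeasurable |>.1
    (hind.indepFun_prodMk hmeas j k i hij.symm hik.symm).symm, hmarg, hpair, hmarg, hmarg]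

lemma pi_prod_map_zip₃ {κ β : Type*} [Fintype κ] [MeasurableSpace β] (μ : Measure β)
    [SigmaFinite μ] :
    ((Measure.pi fun _ : κ => μ).prod ((Measure.pi fun _ : κ => μ).prod
      (Measure.pi fun _ : κ => μ))).map (fun z ℓ => (z.1 ℓ, z.2.1 ℓ, z.2.2 ℓ)) =
      Measure.pi fun _ : κ => μ.prod (μ.prod μ) := by
  let e := (MeasurableEquiv.arrowProdEquivProdArrow β (β × β) κ).trans
    ((MeasurableEquiv.refl _).prodCongr (MeasurableEquiv.arrowProdEquivProdArrow β β κ))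
  have he : MeasurePreserving e (Measure.pi fun _ : κ => μ.prod (μ.prod μ)) _ :=
    ((MeasurePreserving.id _).prod (measurePreserving_arrowProdEquivProdArrow β β κ
      (fun _ => μ) (fun _ => μ))).comp (measurePreserving_arrowProdEquivProdArrow β (β × β) κ _ _)
  exact (he.symm e).map_eq

lemma pi_pi_map_columns₃ {ι κ β : Type*} [Fintype ι] [Fintype κ] [MeasurableSpace β]
    (μ : Measure β) [IsProbabilityMeasure μ] {i j k : ι} (hij : i ≠ j) (hik : i ≠ k)
    (hjk : j ≠ k) :
    (Measure.pi fun _ : ι => Measure.pi fun _ : κ => μ).map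
      (fun x ℓ => (x i ℓ, x j ℓ, x k ℓ)) = Measure.pi fun _ : κ => μ.prod (μ.prod μ) := by
  rw [← pi_prod_map_zip₃, ← pi_map_eval₃ _ hij hik hjk,
    Measure.map_map (by fun_prop) (by fun_prop)]
  rfl

end MeasureTheory.Measure

namespace Finset

lemma sort_triple {α : Type*} [LinearOrder α] {a b c : α} (hab : a < b) (hbc : b < c) :
    ({a, b, c} : Finset α).sort (· ≤ ·) = [a, b, c] := by
  rw [sort_insert _ (by simp [hab.le, (hab.trans hbc).le]) (by simp [hab.ne, (hab.trans hbc).ne]),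
    sort_insert _ (by simp [hbc.le]) (by simp [hbc.ne]), sort_singleton]

end Finset

lemma card_triples (n : ℕ) : (triples n).card = n.choose 3 := by
  suffices (triples n).card = ((Finset.univ : Finset (Fin n)).powersetCard 3).card by simpa
  refine Finset.card_bij (fun t _ => {t.1, t.2.1, t.2.2}) ?_ ?_ ?_
  · rintro ⟨i, j, k⟩ ht
    simp only [triples, Finset.mem_filter] at ht
    rw [Finset.mem_powersetCard, Finset.card_eq_three]
    exact ⟨Finset.subset_univ _, i, j, k, ht.2.1.ne, (ht.2.1.trans ht.2.2).ne, ht.2.2.ne, rfl⟩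
  · rintro ⟨i, j, k⟩ ht ⟨i', j', k'⟩ ht' h
    simp only [triples, Finset.mem_filter] at ht ht'
    have := congrArg (fun s : Finset (Fin n) => s.sort (· ≤ ·)) h
    rw [Finset.sort_triple ht.2.1 ht.2.2, Finset.sort_triple ht'.2.1 ht'.2.2] at this
    simpa using this
  · intro s hs
    rw [Finset.mem_powersetCard] at hs
    let f := s.orderEmbOfFin hs.2
    refine ⟨(f 0, f 1, f 2), by simp [triples], ?_⟩
    ext m
    rw [← Finset.mem_coe (s := s), ← Finset.range_orderEmbOfFin s hs.2]
    constructor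
    · intro hm
      simp only [Finset.mem_insert, Finset.mem_singleton] at hm
      rcases hm with rfl | rfl | rfl <;> exact ⟨_, rfl⟩
    · rintro ⟨a, rfl⟩
      fin_cases a <;> simp [f]

def disjointIndicator {κ : Type*} [Fintype κ] (s t : κ → Bool) : ℝ :=
  ∏ ℓ, if s ℓ && t ℓ then 0 else 1

lemma edgeVal_rigGraph {n d : ℕ} (x : Fin n → Fin d → Bool) {i j : Fin n} (hij : i < j) :
    edgeVal (fun e : PairIdx n => decide (1 ≤ interCard x e.1.1 e.1.2)) i j =
      1 - disjointIndicator (x i) (x j) := by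
  by_cases h : ∃ ℓ, x i ℓ = true ∧ x j ℓ = true
  · obtain ⟨ℓ, hi, hj⟩ := h
    have hcard : 1 ≤ interCard x i j :=
      Finset.card_pos.2 ⟨ℓ, Finset.mem_filter.2 ⟨Finset.mem_univ _, hi, hj⟩⟩
    have hD : disjointIndicator (x i) (x j) = 0 :=
      Finset.prod_eq_zero (Finset.mem_univ ℓ) (by simp [hi, hj])
    simp [edgeVal, hij, hcard, hD]
  · simp only [not_exists, not_and] at h
    have hcard : interCard x i j = 0 := by
      simpa [interCard, Finset.filter_eq_empty_iff] using h
    have hD : disjointIndicator (x i) (x j) = 1 :=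
      Finset.prod_eq_one fun ℓ _ => by cases hx : x i ℓ <;> simp_all
    simp [edgeVal, hij, hcard, hD]

def triangleMoment (q δ : ℝ) (d : ℕ) : ℝ :=
  q ^ 3 - 3 * q ^ 2 * (1 - δ ^ 2) ^ d + 3 * q * (1 - 2 * δ ^ 2 + δ ^ 3) ^ d
    - (1 - 3 * δ ^ 2 + 2 * δ ^ 3) ^ d

lemma integral_rigConfig_triangle {n d : ℕ} {δ : ℝ} (h0 : 0 ≤ δ) (h1 : δ ≤ 1) (q : ℝ)
    {i j k : Fin n} (hij : i ≠ j) (hik : i ≠ k) (hjk : j ≠ k) :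
    ∫ x, (q - disjointIndicator (x i) (x j)) * (q - disjointIndicator (x i) (x k)) *
        (q - disjointIndicator (x j) (x k)) ∂(rigConfig n d δ) = triangleMoment q δ d := by
  have := isProbabilityMeasure_bern h0 h1
  let A : Bool × Bool × Bool → ℝ := fun b => if b.1 && b.2.1 then 0 else 1
  let B : Bool × Bool × Bool → ℝ := fun b => if b.1 && b.2.2 then 0 else 1
  let C : Bool × Bool × Bool → ℝ := fun b => if b.2.1 && b.2.2 then 0 else 1
  have hiid : ∀ G : Bool × Bool × Bool → ℝ,
      ∫ w : Fin d → Bool × Bool × Bool, ∏ ℓ, G (w ℓ)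
        ∂(Measure.pi fun _ => (bern δ).prod ((bern δ).prod (bern δ))) =
        (∫ b, G b ∂((bern δ).prod ((bern δ).prod (bern δ)))) ^ d := fun G => by
    rw [integral_fintype_prod_eq_pow, Fintype.card_fin]
  -- Pointwise products `(A * B) (w ℓ)` let `simp` rewrite with `hiid` by first-order matching.
  have hexpand : ∀ w : Fin d → Bool × Bool × Bool,
      (q - ∏ ℓ, A (w ℓ)) * (q - ∏ ℓ, B (w ℓ)) * (q - ∏ ℓ, C (w ℓ)) =
        q ^ 3 - q ^ 2 * ∏ ℓ, A (w ℓ) - q ^ 2 * ∏ ℓ, B (w ℓ) - q ^ 2 * ∏ ℓ, C (w ℓ)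
          + q * ∏ ℓ, (A * B) (w ℓ) + q * ∏ ℓ, (A * C) (w ℓ) + q * ∏ ℓ, (B * C) (w ℓ)
          - ∏ ℓ, (A * B * C) (w ℓ) := by
    intro w
    simp only [Pi.mul_apply, Finset.prod_mul_distrib]
    ring
  calc _ = ∫ x, (q - ∏ ℓ, A (x i ℓ, x j ℓ, x k ℓ)) * (q - ∏ ℓ, B (x i ℓ, x j ℓ, x k ℓ)) *
        (q - ∏ ℓ, C (x i ℓ, x j ℓ, x k ℓ)) ∂(rigConfig n d δ) := rfl
    _ = ∫ w : Fin d → Bool × Bool × Bool,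
        (q - ∏ ℓ, A (w ℓ)) * (q - ∏ ℓ, B (w ℓ)) * (q - ∏ ℓ, C (w ℓ))
          ∂(Measure.pi fun _ => (bern δ).prod ((bern δ).prod (bern δ))) := by
      rw [← Measure.pi_pi_map_columns₃ _ hij hik hjk, integral_map (by fun_prop)
        (measurable_of_countable _).aestronglyMeasurable, rigConfig]
    _ = _ := by
      simp only [hexpand, integral_add, integral_sub, integral_const_mul, Integrable.of_finite,
        integral_const, hiid, integral_bern_cube h0 h1]
      simp [A, B, C, triangleMoment]
      ring

lemma integral_signedTriangles_rig (n d : ℕ) {δ : ℝ} (h0 : 0 ≤ δ) (h1 : δ ≤ 1) (p : ℝ) :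
    ∫ g, signedTriangles p g ∂(rig n d δ) = n.choose 3 * triangleMoment (1 - p) δ d := by
  have := isProbabilityMeasure_bern h0 h1
  have : IsProbabilityMeasure (rigConfig n d δ) := by unfold rigConfig; infer_instance
  rw [rig, rigTau, integral_map (measurable_of_countable _).aemeasurable
    (measurable_of_countable _).aestronglyMeasurable]
  simp only [signedTriangles]
  rw [integral_finsetSum _ fun _ _ => .of_finite, ← card_triples, ← nsmul_eq_mul,
    ← Finset.sum_const]
  refine Finset.sum_congr rfl fun ⟨i, j, k⟩ ht => ?_
  simp only [triples, Finset.mem_filter] at ht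
  obtain ⟨-, hij, hjk⟩ := ht
  simp only [edgeVal_rigGraph _ hij, edgeVal_rigGraph _ (hij.trans hjk), edgeVal_rigGraph _ hjk,
    sub_right_comm (1 : ℝ) _ p]
  exact integral_rigConfig_triangle h0 h1 _ hij.ne (hij.trans hjk).ne hjk.ne

lemma one_add_pow_le_of_nonneg {x : ℝ} (hx : 0 ≤ x) (d : ℕ) :
    (1 + x) ^ d ≤ 1 + d * x + (d * x) ^ 2 * Real.exp (d * x) := by
  set y := (d : ℝ) * x
  have hy : 0 ≤ y := by positivity
  have hpow : (1 + x) ^ d ≤ Real.exp y := by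
    rw [Real.exp_nat_mul]
    gcongr
    linarith [Real.add_one_le_exp x]
  -- `1 - y ≤ exp (-y)` gives `exp y ≤ 1 + y * exp y`; feed this bound back into itself once.
  have hexp : Real.exp y ≤ 1 + y * Real.exp y := by
    have h := Real.add_one_le_exp (-y)
    have : Real.exp (-y) * Real.exp y = 1 := by rw [← Real.exp_add]; simp
    nlinarith [Real.exp_pos y]
  nlinarith [mul_le_mul_of_nonneg_left hexp hy]

lemma natCast_mul_sq_le_inv {c δ : ℝ} {d : ℕ} (hc : 0 < c) (hδ : δ ^ 2 ≤ 1)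
    (hcd : c ≤ (1 - δ ^ 2) ^ d) : (d : ℝ) * δ ^ 2 ≤ 1 / c := by
  have hB : 1 + (d : ℝ) * δ ^ 2 ≤ (1 + δ ^ 2) ^ d :=
    one_add_mul_le_pow (by nlinarith) d
  have hprod : (1 - δ ^ 2) ^ d * (1 + δ ^ 2) ^ d ≤ 1 := by
    rw [← mul_pow]
    exact pow_le_one₀ (by nlinarith) (by nlinarith)
  rw [le_div_iff₀ hc]
  nlinarith [mul_le_mul hcd hB (by positivity) (pow_nonneg (by linarith) d)]

lemma abs_three_mul_pow_sub_pow_sub_le {u v w r t : ℝ} (d : ℕ) (hu : 0 ≤ u) (huw : u ≤ w)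
    (hv : 0 ≤ v) (hvw : v ≤ w) (hr : 0 ≤ r) (hrt : 3 * u - v - t = r) :
    |3 * (1 + u) ^ d - (1 + v) ^ d - 2 - d * t| ≤ 4 * ((d * w) ^ 2 * Real.exp (d * w)) + d * r := by
  have hrem : ∀ x, 0 ≤ x → x ≤ w →
      0 ≤ (1 + x) ^ d - 1 - d * x ∧
        (1 + x) ^ d - 1 - d * x ≤ (d * w) ^ 2 * Real.exp (d * w) := fun x hx hxw => by
    have hdx : (d : ℝ) * x ≤ d * w := by gcongr
    refine ⟨by linarith [one_add_mul_le_pow (by linarith : (-2 : ℝ) ≤ x) d], ?_⟩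
    have := one_add_pow_le_of_nonneg hx d
    have : ((d : ℝ) * x) ^ 2 * Real.exp (d * x) ≤ (d * w) ^ 2 * Real.exp (d * w) := by
      gcongr
    linarith
  obtain ⟨hu0, hu1⟩ := hrem u hu huw
  obtain ⟨hv0, hv1⟩ := hrem v hv hvw
  have hsplit : 3 * (1 + u) ^ d - (1 + v) ^ d - 2 - d * t =
      3 * ((1 + u) ^ d - 1 - d * u) - ((1 + v) ^ d - 1 - d * v) + d * r := by
    rw [← hrt]; ring
  have hdr : 0 ≤ (d : ℝ) * r := by positivity
  rw [hsplit, abs_le]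
  constructor <;> linarith

lemma abs_three_mul_one_add_pow_sub_le {c δ : ℝ} {d : ℕ} (hc : 0 < c) (hδ0 : 0 ≤ δ) (hδ1 : δ ≤ 1)
    (hca : c ≤ 1 - δ ^ 2) (hdδ : (d : ℝ) * δ ^ 2 ≤ 1 / c) :
    |3 * (1 + δ ^ 3 * (1 - δ) / (1 - δ ^ 2) ^ 2) ^ d
        - (1 + δ ^ 3 * (2 - 3 * δ + δ ^ 3) / (1 - δ ^ 2) ^ 3) ^ d - 2 - d * δ ^ 3| ≤
      (16 * Real.exp (2 / c ^ 4) / c ^ 7 + 2 / c ^ 3) * (d * δ ^ 4) := by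
  set a := 1 - δ ^ 2
  set u := δ ^ 3 * (1 - δ) / a ^ 2 with hu
  set v := δ ^ 3 * (2 - 3 * δ + δ ^ 3) / a ^ 3 with hv
  set w := 2 * δ ^ 3 / c ^ 3
  have ha0 : 0 < a := hc.trans_le hca
  have hc1 : c ≤ 1 := by nlinarith
  have hw : 0 ≤ 2 - 3 * δ + δ ^ 3 ∧ 2 - 3 * δ + δ ^ 3 ≤ 2 := ⟨by nlinarith, by nlinarith⟩
  have hac : ∀ k : ℕ, c ^ k ≤ a ^ k := fun k => pow_le_pow_left₀ hc.le hca k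
  have hu0 : 0 ≤ u := div_nonneg (mul_nonneg (by positivity) (by linarith)) (by positivity)
  have hv0 : 0 ≤ v := div_nonneg (mul_nonneg (by positivity) hw.1) (by positivity)
  have huw : u ≤ w := by
    refine div_le_div₀ (by positivity) (by nlinarith) (by positivity) ?_
    nlinarith [hac 2, pow_le_pow_of_le_one hc.le hc1 (by norm_num : 2 ≤ 3)]
  have hvw : v ≤ w :=
    div_le_div₀ (by positivity) (by nlinarith [pow_nonneg hδ0 3]) (by positivity) (hac 3)
  have hr : 3 * u - v - δ ^ 3 = δ ^ 6 * (2 - 3 * δ + δ ^ 3) / a ^ 3 := by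
    rw [hu, hv]; field_simp; ring
  have hr0 : 0 ≤ δ ^ 6 * (2 - 3 * δ + δ ^ 3) / a ^ 3 :=
    div_nonneg (mul_nonneg (by positivity) hw.1) (by positivity)
  have hdr : (d : ℝ) * (δ ^ 6 * (2 - 3 * δ + δ ^ 3) / a ^ 3) ≤ 2 / c ^ 3 * (d * δ ^ 4) := by
    have h64 : δ ^ 6 ≤ δ ^ 4 := pow_le_pow_of_le_one hδ0 hδ1 (by norm_num)
    have hle : δ ^ 6 * (2 - 3 * δ + δ ^ 3) / a ^ 3 ≤ 2 * δ ^ 4 / c ^ 3 :=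
      div_le_div₀ (by positivity)
        (by nlinarith [mul_le_mul_of_nonneg_left hw.2 (pow_nonneg hδ0 6)]) (by positivity) (hac 3)
    calc _ ≤ (d : ℝ) * (2 * δ ^ 4 / c ^ 3) := by gcongr
      _ = _ := by ring
  have hdw : (d : ℝ) * w ≤ 2 / c ^ 4 :=
    calc (d : ℝ) * w = 2 * (d * δ ^ 2) * δ / c ^ 3 := by ring
      _ ≤ 2 * (1 / c) * 1 / c ^ 3 := by gcongr
      _ = 2 / c ^ 4 := by field_simp
  have hdw2 : ((d : ℝ) * w) ^ 2 ≤ 4 / c ^ 7 * (d * δ ^ 4) :=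
    calc ((d : ℝ) * w) ^ 2 = 4 * (d * δ ^ 2) * (d * δ ^ 4) / c ^ 6 := by ring
      _ ≤ 4 * (1 / c) * (d * δ ^ 4) / c ^ 6 := by gcongr
      _ = 4 / c ^ 7 * (d * δ ^ 4) := by field_simp
  calc _ ≤ 4 * ((d * w) ^ 2 * Real.exp (d * w)) + d * (δ ^ 6 * (2 - 3 * δ + δ ^ 3) / a ^ 3) :=
        abs_three_mul_pow_sub_pow_sub_le d hu0 huw hv0 hvw hr0 hr
    _ ≤ 4 * (4 / c ^ 7 * (d * δ ^ 4) * Real.exp (2 / c ^ 4)) + 2 / c ^ 3 * (d * δ ^ 4) := by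
        gcongr
    _ = _ := by ring

lemma triangleMoment_eq {δ : ℝ} (hδ : δ ^ 2 < 1) (d : ℕ) :
    triangleMoment ((1 - δ ^ 2) ^ d) δ d = ((1 - δ ^ 2) ^ d) ^ 3 *
      (3 * (1 + δ ^ 3 * (1 - δ) / (1 - δ ^ 2) ^ 2) ^ d
        - (1 + δ ^ 3 * (2 - 3 * δ + δ ^ 3) / (1 - δ ^ 2) ^ 3) ^ d - 2) := by
  have ha : 1 - δ ^ 2 ≠ 0 := by linarith
  have hb : 1 - 2 * δ ^ 2 + δ ^ 3 = (1 - δ ^ 2) ^ 2 * (1 + δ ^ 3 * (1 - δ) / (1 - δ ^ 2) ^ 2) := by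
    field_simp; ring
  have he : 1 - 3 * δ ^ 2 + 2 * δ ^ 3 =
      (1 - δ ^ 2) ^ 3 * (1 + δ ^ 3 * (2 - 3 * δ + δ ^ 3) / (1 - δ ^ 2) ^ 3) := by
    field_simp; ring
  rw [triangleMoment, hb, he, mul_pow, mul_pow, pow_right_comm _ 2, pow_right_comm _ 3]
  ring

lemma abs_triangleMoment_sub_le {c δ : ℝ} {d : ℕ} (hc : 0 < c) (hδ0 : 0 ≤ δ) (hδ1 : δ < 1)
    (hcd : c ≤ (1 - δ ^ 2) ^ d) :
    |triangleMoment ((1 - δ ^ 2) ^ d) δ d - ((1 - δ ^ 2) ^ d) ^ 3 * (d * δ ^ 3)| ≤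
      (16 * Real.exp (2 / c ^ 4) / c ^ 7 + 2 / c ^ 3) * (((1 - δ ^ 2) ^ d) ^ 3 * (d * δ ^ 4)) := by
  rcases Nat.eq_zero_or_pos d with rfl | hd
  · simp [triangleMoment]
  have hδ2 : δ ^ 2 < 1 := by nlinarith
  have hca : c ≤ 1 - δ ^ 2 := hcd.trans (pow_le_of_le_one (by linarith) (by nlinarith) hd.ne')
  rw [triangleMoment_eq hδ2, ← mul_sub, abs_mul, abs_of_nonneg (by positivity), mul_left_comm]
  gcongr
  exact abs_three_mul_one_add_pow_sub_le hc hδ0 hδ1.le hca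
    (natCast_mul_sq_le_inv hc hδ2.le hcd)

theorem rig_signedTriangles_expectation
    (p δ : ℕ → ℝ) (d : ℕ → ℕ)
    (hδ : ∀ n, 0 < δ n ∧ δ n < 1)
    (hrel : ∀ n, 1 - p n = (1 - δ n ^ 2) ^ d n)
    (hpbd : ∃ c > (0 : ℝ), ∀ᶠ n : ℕ in atTop, c ≤ 1 - p n) :
    ∃ C > (0 : ℝ), ∀ᶠ n : ℕ in atTop,
      |(∫ g, signedTriangles (p n) g ∂(rig n (d n) (δ n))) -
          (n.choose 3 : ℝ) * (1 - p n) ^ 3 * ((d n : ℝ) * δ n ^ 3)| ≤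
        C * ((n.choose 3 : ℝ) * (1 - p n) ^ 3 * ((d n : ℝ) * δ n ^ 4)) := by
  obtain ⟨c, hc, hev⟩ := hpbd
  refine ⟨16 * Real.exp (2 / c ^ 4) / c ^ 7 + 2 / c ^ 3, by positivity, ?_⟩
  filter_upwards [hev] with n hn
  obtain ⟨hδ0, hδ1⟩ := hδ n
  rw [integral_signedTriangles_rig n (d n) hδ0.le hδ1.le, hrel n, mul_assoc (n.choose 3 : ℝ),
    ← mul_sub, abs_mul, Nat.abs_cast, mul_assoc (n.choose 3 : ℝ), mul_left_comm _ (n.choose 3 : ℝ)]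
  exact mul_le_mul_of_nonneg_left (abs_triangleMoment_sub_le hc hδ0.le hδ1 (hrel n ▸ hn))
    (Nat.cast_nonneg _)
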